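/- arXiv:1011.1061 — 2 statements merged into one kernel-verified Lean document; each statement's English description precedes it below -/
import Mathlib

section
/- Let a ≥ 1 and b₁, b₂, b₃, b₄ ≥ 0 be integers satisfying a² = b₁² + b₂² + b₃² + b₄², 3a − b₁ − b₂ − b₃ − b₄ = 2, a = b₁ + b₂ + b₃, and a ≥ bᵢ + b₄ for every i ∈ {1,2,3}. Then a = 1, b₄ = 0, and (b₁, b₂, b₃) is one of (1,0,0), (0,1,0), (0,0,1). -/
/-- Diophantine content of the proof of Proposition 7.4, case P̂₁. -/
theorem stmt_0 (a b1 b2 b3 b4 : ℤ)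
    (ha : 1 ≤ a) (hb1 : 0 ≤ b1) (hb2 : 0 ≤ b2) (hb3 : 0 ≤ b3) (hb4 : 0 ≤ b4)
    (hsq : a ^ 2 = b1 ^ 2 + b2 ^ 2 + b3 ^ 2 + b4 ^ 2)
    (hK : 3 * a - b1 - b2 - b3 - b4 = 2)
    (hc : a = b1 + b2 + b3)
    (h1 : b1 + b4 ≤ a) (h2 : b2 + b4 ≤ a) (h3 : b3 + b4 ≤ a) :
    a = 1 ∧ b4 = 0 ∧
      ((b1, b2, b3) = (1, 0, 0) ∨ (b1, b2, b3) = (0, 1, 0) ∨ (b1, b2, b3) = (0, 0, 1)) := by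
  have h : a = 1 ∧ b4 = 0 ∧
      ((b1 = 1 ∧ b2 = 0 ∧ b3 = 0) ∨ (b1 = 0 ∧ b2 = 1 ∧ b3 = 0) ∨
        (b1 = 0 ∧ b2 = 0 ∧ b3 = 1)) := by omega
  simpa [Prod.ext_iff] using h
end

section
/- Let N = {v ∈ ℤ⁵ : v·v = −1 and v·K = −1}, where ℤ⁵ has basis l, e₁, e₂, e₃, e₄, the symmetric bilinear form is determined by l·l = 1, eᵢ·eᵢ = −1, l·eᵢ = 0, eᵢ·eⱼ = 0 for i ≠ j, and K = −3l + e₁ + e₂ + e₃ + e₄. Then for any three vectors c₁, c₂, c ∈ N with c₁·c = 0 and c₂·c = 0, there exists a ℤ-linear automorphism σ of ℤ⁵ preserving the bilinear form such that σ(K) = K, σ(c) = c, and σ(c₁) = c₂. -/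
open Matrix
set_option maxHeartbeats 4000000

/-- The intersection form on the Picard lattice ℤ⁵ of the degree 5 del Pezzo surface,
in the basis l, e₁, e₂, e₃, e₄: l·l = 1, eᵢ·eᵢ = -1, l·eᵢ = 0, eᵢ·eⱼ = 0 for i ≠ j. -/
def interForm (u v : Fin 5 → ℤ) : ℤ :=
  u 0 * v 0 - u 1 * v 1 - u 2 * v 2 - u 3 * v 3 - u 4 * v 4

/-- The canonical class K = -3l + e₁ + e₂ + e₃ + e₄. -/
def Kcl : Fin 5 → ℤ := ![-3, 1, 1, 1, 1]

/-- The set of (-1)-classes: v·v = -1 and v·K = -1. -/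
def negOneSet : Set (Fin 5 → ℤ) :=
  {v | interForm v v = -1 ∧ interForm v Kcl = -1}

def Jmat : Matrix (Fin 5) (Fin 5) ℤ :=
  !![1,0,0,0,0; 0,-1,0,0,0; 0,0,-1,0,0; 0,0,0,-1,0; 0,0,0,0,-1]

lemma interForm_eq (u v : Fin 5 → ℤ) : interForm u v = u ⬝ᵥ Jmat.mulVec v := by
  simp [interForm, Jmat, Matrix.mulVec, dotProduct, Fin.sum_univ_five,
    Matrix.cons_val_zero, Matrix.cons_val_one, Matrix.head_cons, Matrix.vecHead,
    Matrix.vecTail, Function.comp]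
  ring

lemma form_pres (M : Matrix (Fin 5) (Fin 5) ℤ) (hM : Mᵀ * Jmat * M = Jmat)
    (u v : Fin 5 → ℤ) : interForm (M.mulVec u) (M.mulVec v) = interForm u v := by
  have key : ∀ w x : Fin 5 → ℤ,
      w ⬝ᵥ ((Mᵀ * Jmat * M) *ᵥ x) = (M *ᵥ w) ⬝ᵥ (Jmat *ᵥ (M *ᵥ x)) := by
    intro w x
    rw [← Matrix.mulVec_mulVec, ← Matrix.mulVec_mulVec, Matrix.dotProduct_mulVec,
      Matrix.vecMul_transpose]
  rw [interForm_eq, interForm_eq]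
  conv_rhs => rw [← hM, key]

def mats : List (Matrix (Fin 5) (Fin 5) ℤ) :=
  [!![1, 0, 0, 0, 0; 0, 0, 0, 0, 1; 0, 0, 0, 1, 0; 0, 0, 1, 0, 0; 0, 1, 0, 0, 0],
   !![1, 0, 0, 0, 0; 0, 0, 0, 0, 1; 0, 0, 1, 0, 0; 0, 0, 0, 1, 0; 0, 1, 0, 0, 0],
   !![1, 0, 0, 0, 0; 0, 0, 0, 0, 1; 0, 0, 1, 0, 0; 0, 1, 0, 0, 0; 0, 0, 0, 1, 0],
   !![1, 0, 0, 0, 0; 0, 0, 0, 0, 1; 0, 1, 0, 0, 0; 0, 0, 0, 1, 0; 0, 0, 1, 0, 0],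
   !![1, 0, 0, 0, 0; 0, 0, 0, 1, 0; 0, 0, 0, 0, 1; 0, 1, 0, 0, 0; 0, 0, 1, 0, 0],
   !![1, 0, 0, 0, 0; 0, 0, 0, 1, 0; 0, 0, 1, 0, 0; 0, 0, 0, 0, 1; 0, 1, 0, 0, 0],
   !![1, 0, 0, 0, 0; 0, 0, 0, 1, 0; 0, 0, 1, 0, 0; 0, 1, 0, 0, 0; 0, 0, 0, 0, 1],
   !![1, 0, 0, 0, 0; 0, 0, 0, 1, 0; 0, 1, 0, 0, 0; 0, 0, 1, 0, 0; 0, 0, 0, 0, 1],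
   !![1, 0, 0, 0, 0; 0, 0, 1, 0, 0; 0, 0, 0, 0, 1; 0, 0, 0, 1, 0; 0, 1, 0, 0, 0],
   !![1, 0, 0, 0, 0; 0, 0, 1, 0, 0; 0, 0, 0, 1, 0; 0, 1, 0, 0, 0; 0, 0, 0, 0, 1],
   !![1, 0, 0, 0, 0; 0, 0, 1, 0, 0; 0, 1, 0, 0, 0; 0, 0, 0, 0, 1; 0, 0, 0, 1, 0],
   !![1, 0, 0, 0, 0; 0, 0, 1, 0, 0; 0, 1, 0, 0, 0; 0, 0, 0, 1, 0; 0, 0, 0, 0, 1],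
   !![1, 0, 0, 0, 0; 0, 1, 0, 0, 0; 0, 0, 0, 0, 1; 0, 0, 0, 1, 0; 0, 0, 1, 0, 0],
   !![1, 0, 0, 0, 0; 0, 1, 0, 0, 0; 0, 0, 0, 0, 1; 0, 0, 1, 0, 0; 0, 0, 0, 1, 0],
   !![1, 0, 0, 0, 0; 0, 1, 0, 0, 0; 0, 0, 0, 1, 0; 0, 0, 0, 0, 1; 0, 0, 1, 0, 0],
   !![1, 0, 0, 0, 0; 0, 1, 0, 0, 0; 0, 0, 0, 1, 0; 0, 0, 1, 0, 0; 0, 0, 0, 0, 1],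
   !![1, 0, 0, 0, 0; 0, 1, 0, 0, 0; 0, 0, 1, 0, 0; 0, 0, 0, 0, 1; 0, 0, 0, 1, 0],
   !![1, 0, 0, 0, 0; 0, 1, 0, 0, 0; 0, 0, 1, 0, 0; 0, 0, 0, 1, 0; 0, 0, 0, 0, 1],
   !![2, 0, 1, 1, 1; -1, 0, -1, -1, 0; -1, 0, -1, 0, -1; -1, 0, 0, -1, -1; 0, 1, 0, 0, 0],
   !![2, 0, 1, 1, 1; -1, 0, -1, -1, 0; -1, 0, 0, -1, -1; -1, 0, -1, 0, -1; 0, 1, 0, 0, 0],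
   !![2, 0, 1, 1, 1; -1, 0, -1, 0, -1; -1, 0, -1, -1, 0; 0, 1, 0, 0, 0; -1, 0, 0, -1, -1],
   !![2, 0, 1, 1, 1; -1, 0, -1, 0, -1; -1, 0, 0, -1, -1; 0, 1, 0, 0, 0; -1, 0, -1, -1, 0],
   !![2, 0, 1, 1, 1; -1, 0, 0, -1, -1; 0, 1, 0, 0, 0; -1, 0, -1, -1, 0; -1, 0, -1, 0, -1],
   !![2, 0, 1, 1, 1; -1, 0, 0, -1, -1; 0, 1, 0, 0, 0; -1, 0, -1, 0, -1; -1, 0, -1, -1, 0],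
   !![2, 0, 1, 1, 1; 0, 1, 0, 0, 0; -1, 0, -1, -1, 0; -1, 0, -1, 0, -1; -1, 0, 0, -1, -1],
   !![2, 0, 1, 1, 1; 0, 1, 0, 0, 0; -1, 0, -1, -1, 0; -1, 0, 0, -1, -1; -1, 0, -1, 0, -1],
   !![2, 0, 1, 1, 1; 0, 1, 0, 0, 0; -1, 0, -1, 0, -1; -1, 0, -1, -1, 0; -1, 0, 0, -1, -1],
   !![2, 0, 1, 1, 1; 0, 1, 0, 0, 0; -1, 0, -1, 0, -1; -1, 0, 0, -1, -1; -1, 0, -1, -1, 0],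
   !![2, 0, 1, 1, 1; 0, 1, 0, 0, 0; -1, 0, 0, -1, -1; -1, 0, -1, -1, 0; -1, 0, -1, 0, -1],
   !![2, 0, 1, 1, 1; 0, 1, 0, 0, 0; -1, 0, 0, -1, -1; -1, 0, -1, 0, -1; -1, 0, -1, -1, 0],
   !![2, 1, 0, 1, 1; -1, -1, 0, -1, 0; -1, -1, 0, 0, -1; 0, 0, 1, 0, 0; -1, 0, 0, -1, -1],
   !![2, 1, 0, 1, 1; -1, -1, 0, -1, 0; 0, 0, 1, 0, 0; -1, -1, 0, 0, -1; -1, 0, 0, -1, -1],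
   !![2, 1, 0, 1, 1; -1, -1, 0, -1, 0; 0, 0, 1, 0, 0; -1, 0, 0, -1, -1; -1, -1, 0, 0, -1],
   !![2, 1, 0, 1, 1; -1, -1, 0, 0, -1; -1, -1, 0, -1, 0; -1, 0, 0, -1, -1; 0, 0, 1, 0, 0],
   !![2, 1, 0, 1, 1; -1, -1, 0, 0, -1; 0, 0, 1, 0, 0; -1, -1, 0, -1, 0; -1, 0, 0, -1, -1],
   !![2, 1, 0, 1, 1; -1, -1, 0, 0, -1; 0, 0, 1, 0, 0; -1, 0, 0, -1, -1; -1, -1, 0, -1, 0],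
   !![2, 1, 0, 1, 1; -1, 0, 0, -1, -1; -1, -1, 0, -1, 0; -1, -1, 0, 0, -1; 0, 0, 1, 0, 0],
   !![2, 1, 0, 1, 1; -1, 0, 0, -1, -1; -1, -1, 0, 0, -1; 0, 0, 1, 0, 0; -1, -1, 0, -1, 0],
   !![2, 1, 0, 1, 1; -1, 0, 0, -1, -1; 0, 0, 1, 0, 0; -1, -1, 0, -1, 0; -1, -1, 0, 0, -1],
   !![2, 1, 0, 1, 1; -1, 0, 0, -1, -1; 0, 0, 1, 0, 0; -1, -1, 0, 0, -1; -1, -1, 0, -1, 0],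
   !![2, 1, 1, 0, 1; -1, -1, -1, 0, 0; -1, -1, 0, 0, -1; 0, 0, 0, 1, 0; -1, 0, -1, 0, -1],
   !![2, 1, 1, 0, 1; -1, -1, -1, 0, 0; -1, 0, -1, 0, -1; 0, 0, 0, 1, 0; -1, -1, 0, 0, -1],
   !![2, 1, 1, 0, 1; -1, -1, 0, 0, -1; -1, -1, -1, 0, 0; 0, 0, 0, 1, 0; -1, 0, -1, 0, -1],
   !![2, 1, 1, 0, 1; -1, -1, 0, 0, -1; -1, 0, -1, 0, -1; -1, -1, -1, 0, 0; 0, 0, 0, 1, 0],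
   !![2, 1, 1, 0, 1; -1, -1, 0, 0, -1; -1, 0, -1, 0, -1; 0, 0, 0, 1, 0; -1, -1, -1, 0, 0],
   !![2, 1, 1, 0, 1; -1, 0, -1, 0, -1; -1, -1, -1, 0, 0; 0, 0, 0, 1, 0; -1, -1, 0, 0, -1],
   !![2, 1, 1, 0, 1; -1, 0, -1, 0, -1; -1, -1, 0, 0, -1; -1, -1, -1, 0, 0; 0, 0, 0, 1, 0],
   !![2, 1, 1, 0, 1; -1, 0, -1, 0, -1; -1, -1, 0, 0, -1; 0, 0, 0, 1, 0; -1, -1, -1, 0, 0],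
   !![2, 1, 1, 1, 0; -1, -1, -1, 0, 0; -1, -1, 0, -1, 0; -1, 0, -1, -1, 0; 0, 0, 0, 0, 1],
   !![2, 1, 1, 1, 0; -1, -1, -1, 0, 0; -1, 0, -1, -1, 0; -1, -1, 0, -1, 0; 0, 0, 0, 0, 1],
   !![2, 1, 1, 1, 0; -1, -1, 0, -1, 0; -1, -1, -1, 0, 0; -1, 0, -1, -1, 0; 0, 0, 0, 0, 1],
   !![2, 1, 1, 1, 0; -1, -1, 0, -1, 0; -1, 0, -1, -1, 0; -1, -1, -1, 0, 0; 0, 0, 0, 0, 1],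
   !![2, 1, 1, 1, 0; -1, 0, -1, -1, 0; -1, -1, -1, 0, 0; -1, -1, 0, -1, 0; 0, 0, 0, 0, 1],
   !![2, 1, 1, 1, 0; -1, 0, -1, -1, 0; -1, -1, 0, -1, 0; -1, -1, -1, 0, 0; 0, 0, 0, 0, 1]]

lemma mats_orth : ∀ M ∈ mats, Mᵀ * Jmat * M = Jmat := by decide

lemma mats_K : ∀ M ∈ mats, M.mulVec Kcl = Kcl := by decide

def mkσ (M N : Matrix (Fin 5) (Fin 5) ℤ) (hMN : M * N = 1) (hNM : N * M = 1) :
    (Fin 5 → ℤ) ≃ₗ[ℤ] (Fin 5 → ℤ) :=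
  LinearEquiv.ofLinear M.mulVecLin N.mulVecLin
    (by rw [← Matrix.mulVecLin_mul, hMN, Matrix.mulVecLin_one])
    (by rw [← Matrix.mulVecLin_mul, hNM, Matrix.mulVecLin_one])

lemma exists_good (c c1 c2 : Fin 5 → ℤ)
    (hex : ∃ M ∈ mats, M.mulVec c = c ∧ M.mulVec c1 = c2) :
    ∃ σ : (Fin 5 → ℤ) ≃ₗ[ℤ] (Fin 5 → ℤ),
      (∀ u v, interForm (σ u) (σ v) = interForm u v) ∧ σ Kcl = Kcl ∧
        σ c = c ∧ σ c1 = c2 := by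
  obtain ⟨M, hM, hc, h12⟩ := hex
  have horth : Mᵀ * Jmat * M = Jmat := mats_orth M hM
  have hJJ : Jmat * Jmat = 1 := by decide
  have hNM : (Jmat * Mᵀ * Jmat) * M = 1 := by
    calc (Jmat * Mᵀ * Jmat) * M = Jmat * (Mᵀ * Jmat * M) := by
          simp only [Matrix.mul_assoc]
    _ = 1 := by rw [horth, hJJ]
  have hMN : M * (Jmat * Mᵀ * Jmat) = 1 := mul_eq_one_comm.mpr hNM
  refine ⟨mkσ M _ hMN hNM, ?_, ?_, hc, h12⟩
  · intro u v
    exact form_pres M horth u v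
  · exact mats_K M hM

lemma classify' (a b1 b2 b3 b4 : ℤ)
    (hq : a * a - b1 * b1 - b2 * b2 - b3 * b3 - b4 * b4 = -1)
    (hl : 3 * a + b1 + b2 + b3 + b4 = 1) :
    (a = 0 ∧ b1 = 1 ∧ b2 = 0 ∧ b3 = 0 ∧ b4 = 0) ∨
    (a = 0 ∧ b1 = 0 ∧ b2 = 1 ∧ b3 = 0 ∧ b4 = 0) ∨
    (a = 0 ∧ b1 = 0 ∧ b2 = 0 ∧ b3 = 1 ∧ b4 = 0) ∨
    (a = 0 ∧ b1 = 0 ∧ b2 = 0 ∧ b3 = 0 ∧ b4 = 1) ∨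
    (a = 1 ∧ b1 = -1 ∧ b2 = -1 ∧ b3 = 0 ∧ b4 = 0) ∨
    (a = 1 ∧ b1 = -1 ∧ b2 = 0 ∧ b3 = -1 ∧ b4 = 0) ∨
    (a = 1 ∧ b1 = -1 ∧ b2 = 0 ∧ b3 = 0 ∧ b4 = -1) ∨
    (a = 1 ∧ b1 = 0 ∧ b2 = -1 ∧ b3 = -1 ∧ b4 = 0) ∨
    (a = 1 ∧ b1 = 0 ∧ b2 = -1 ∧ b3 = 0 ∧ b4 = -1) ∨
    (a = 1 ∧ b1 = 0 ∧ b2 = 0 ∧ b3 = -1 ∧ b4 = -1) := by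
  have key : 5 * a * a - 6 * a - 3 ≤ 0 := by
    nlinarith [sq_nonneg (b1 - b2), sq_nonneg (b1 - b3), sq_nonneg (b1 - b4),
      sq_nonneg (b2 - b3), sq_nonneg (b2 - b4), sq_nonneg (b3 - b4)]
  have ha0 : 0 ≤ a := by nlinarith [sq_nonneg (a + 1)]
  have ha1 : a ≤ 1 := by nlinarith [sq_nonneg (a - 2)]
  have hs : b1 * b1 + b2 * b2 + b3 * b3 + b4 * b4 ≤ 2 := by nlinarith
  have hb1 : -1 ≤ b1 ∧ b1 ≤ 1 := by
    constructor <;> nlinarith [sq_nonneg (b1 + 2), sq_nonneg (b1 - 2), sq_nonneg b2, sq_nonneg b3, sq_nonneg b4]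
  have hb2 : -1 ≤ b2 ∧ b2 ≤ 1 := by
    constructor <;> nlinarith [sq_nonneg (b2 + 2), sq_nonneg (b2 - 2), sq_nonneg b1, sq_nonneg b3, sq_nonneg b4]
  have hb3 : -1 ≤ b3 ∧ b3 ≤ 1 := by
    constructor <;> nlinarith [sq_nonneg (b3 + 2), sq_nonneg (b3 - 2), sq_nonneg b1, sq_nonneg b2, sq_nonneg b4]
  have hb4 : -1 ≤ b4 ∧ b4 ≤ 1 := by
    constructor <;> nlinarith [sq_nonneg (b4 + 2), sq_nonneg (b4 - 2), sq_nonneg b1, sq_nonneg b2, sq_nonneg b3]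
  obtain ⟨h1a, h1b⟩ := hb1; obtain ⟨h2a, h2b⟩ := hb2
  obtain ⟨h3a, h3b⟩ := hb3; obtain ⟨h4a, h4b⟩ := hb4
  have ea : a = 0 ∨ a = 1 := by omega
  have e1 : b1 = -1 ∨ b1 = 0 ∨ b1 = 1 := by omega
  have e2 : b2 = -1 ∨ b2 = 0 ∨ b2 = 1 := by omega
  have e3 : b3 = -1 ∨ b3 = 0 ∨ b3 = 1 := by omega
  have e4 : b4 = -1 ∨ b4 = 0 ∨ b4 = 1 := by omega
  clear key hs ha0 ha1 h1a h1b h2a h2b h3a h3b h4a h4b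
  rcases ea with rfl|rfl <;> rcases e1 with rfl|rfl|rfl <;> rcases e2 with rfl|rfl|rfl <;>
    rcases e3 with rfl|rfl|rfl <;> rcases e4 with rfl|rfl|rfl <;> revert hq hl <;> decide

lemma vec_eq (v : Fin 5 → ℤ) {a b cc d e : ℤ} (h0 : v 0 = a) (h1 : v 1 = b)
    (h2 : v 2 = cc) (h3 : v 3 = d) (h4 : v 4 = e) : v = ![a, b, cc, d, e] := by
  funext i
  fin_cases i <;> simp_all

lemma classify (v : Fin 5 → ℤ) (hv : v ∈ negOneSet) :
    v = ![0, 1, 0, 0, 0] ∨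
    v = ![0, 0, 1, 0, 0] ∨
    v = ![0, 0, 0, 1, 0] ∨
    v = ![0, 0, 0, 0, 1] ∨
    v = ![1, -1, -1, 0, 0] ∨
    v = ![1, -1, 0, -1, 0] ∨
    v = ![1, -1, 0, 0, -1] ∨
    v = ![1, 0, -1, -1, 0] ∨
    v = ![1, 0, -1, 0, -1] ∨
    v = ![1, 0, 0, -1, -1] := by
  obtain ⟨hq, hl⟩ := hv
  have hq' : v 0 * v 0 - v 1 * v 1 - v 2 * v 2 - v 3 * v 3 - v 4 * v 4 = -1 := hq
  have hl' : 3 * v 0 + v 1 + v 2 + v 3 + v 4 = 1 := by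
    have h2 : v 0 * (-3) - v 1 * 1 - v 2 * 1 - v 3 * 1 - v 4 * 1 = -1 := hl
    omega
  rcases classify' (v 0) (v 1) (v 2) (v 3) (v 4) hq' hl' with
    ⟨r0,r1,r2,r3,r4⟩|⟨r0,r1,r2,r3,r4⟩|⟨r0,r1,r2,r3,r4⟩|⟨r0,r1,r2,r3,r4⟩|⟨r0,r1,r2,r3,r4⟩|⟨r0,r1,r2,r3,r4⟩|⟨r0,r1,r2,r3,r4⟩|⟨r0,r1,r2,r3,r4⟩|⟨r0,r1,r2,r3,r4⟩|⟨r0,r1,r2,r3,r4⟩ <;>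
    simp only [vec_eq v r0 r1 r2 r3 r4, true_or, or_true]

/-- Lattice-theoretic form of Fact 3.5(ii). -/
theorem stmt_10 (c1 c2 c : Fin 5 → ℤ)
    (h1 : c1 ∈ negOneSet) (h2 : c2 ∈ negOneSet) (h : c ∈ negOneSet)
    (h1c : interForm c1 c = 0) (h2c : interForm c2 c = 0) :
    ∃ σ : (Fin 5 → ℤ) ≃ₗ[ℤ] (Fin 5 → ℤ),
      (∀ u v, interForm (σ u) (σ v) = interForm u v) ∧ σ Kcl = Kcl ∧
        σ c = c ∧ σ c1 = c2 := by
  have Hc := classify c h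
  have H1 := classify c1 h1
  have H2 := classify c2 h2
  clear h1 h2 h
  rcases Hc with rfl|rfl|rfl|rfl|rfl|rfl|rfl|rfl|rfl|rfl <;> rcases H1 with rfl|rfl|rfl|rfl|rfl|rfl|rfl|rfl|rfl|rfl <;>
    first
    | exact absurd h1c (by decide)
    | (rcases H2 with rfl|rfl|rfl|rfl|rfl|rfl|rfl|rfl|rfl|rfl <;>
        first
        | exact absurd h2c (by decide)
        | exact exists_good _ _ _ (by decide))
end
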